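/- arXiv:2307.09339 — 4 statements merged into one kernel-verified Lean document; each statement's English description precedes it below -/
import Mathlib

section
/- Let M_1 : X → PMF(Y) satisfy ε_1-local differential privacy, and let M_2 : X × Y → PMF(Z) be such that for every fixed y ∈ Y the mechanism x ↦ M_2(x, y) satisfies ε_2-local differential privacy. Then the adaptive composition x ↦ (M_1(x)).bind(y ↦ (M_2(x, y)).map(z ↦ (y, z))), which releases a first perturbed value y and then a second value z whose perturbation may depend on the already-released y, satisfies (ε_1 + ε_2)-local differential privacy on X. -/
open scoped ENNReal

namespace PMF

variable {α β : Type*}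

theorem bind_apply_le_mul_bind_apply {p q : PMF α} {f g : α → PMF β} {c d : ℝ≥0∞}
    (hpq : ∀ a, p a ≤ c * q a) (hfg : ∀ a b, f a b ≤ d * g a b) (b : β) :
    p.bind f b ≤ c * d * q.bind g b := by
  simp only [bind_apply]
  rw [← ENNReal.tsum_mul_left]
  refine ENNReal.tsum_le_tsum fun a => ?_
  calc p a * f a b ≤ (c * q a) * (d * g a b) := mul_le_mul' (hpq a) (hfg a b)
    _ = c * d * (q a * g a b) := by ring

theorem map_apply_le_mul_map_apply {p q : PMF α} {c : ℝ≥0∞} (hpq : ∀ a, p a ≤ c * q a)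
    (f : α → β) (b : β) : p.map f b ≤ c * q.map f b := by
  simpa only [← bind_pure_comp, mul_one] using
    bind_apply_le_mul_bind_apply (d := 1) hpq (fun _ _ => (one_mul _).ge) b

end PMF

/-- Adaptive composition of two LDP mechanisms. If `M₁` satisfies
`ε₁`-LDP and, for every fixed already-released output `y`, `x ↦ M₂ x y` satisfies
`ε₂`-LDP, then the mechanism releasing the pair `(y, z)` satisfies `(ε₁ + ε₂)`-LDP. -/
theorem adaptive_composition_two_ldp
    {X Y Z : Type*} (M₁ : X → PMF Y) (M₂ : X → Y → PMF Z) (ε₁ ε₂ : ℝ)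
    (hM₁ : ∀ (x x' : X) (y : Y),
      (M₁ x) y ≤ ENNReal.ofReal (Real.exp ε₁) * (M₁ x') y)
    (hM₂ : ∀ (y : Y) (x x' : X) (z : Z),
      (M₂ x y) z ≤ ENNReal.ofReal (Real.exp ε₂) * (M₂ x' y) z) :
    ∀ (x x' : X) (p : Y × Z),
      ((M₁ x).bind (fun y => (M₂ x y).map (fun z => (y, z)))) p ≤
        ENNReal.ofReal (Real.exp (ε₁ + ε₂)) *
          ((M₁ x').bind (fun y => (M₂ x' y).map (fun z => (y, z)))) p := by
  intro x x' p
  rw [Real.exp_add, ENNReal.ofReal_mul (Real.exp_nonneg _)]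
  exact PMF.bind_apply_le_mul_bind_apply (hM₁ x x')
    (fun y => PMF.map_apply_le_mul_map_apply (hM₂ y x x') _) p
end

section
/- Let X and R be finite nonempty sets, u : X × R → ℝ a utility function, Δu = max_{x, x' ∈ X, r ∈ R} |u(x, r) − u(x', r)| the sensitivity, with Δu > 0, and ε > 0. The exponential mechanism, which on input x outputs r ∈ R with probability exp(ε·u(x,r)/(2Δu)) / ∑_{r' ∈ R} exp(ε·u(x,r')/(2Δu)), satisfies ε-local differential privacy: for all x, x' ∈ X and all r ∈ R, the probability of output r on input x is at most e^ε times the probability of output r on input x'. -/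
open Real Finset

lemma exp_le_exp_mul_exp_of_sub_le {a b c : ℝ} (h : a - b ≤ c) : exp a ≤ exp c * exp b := by
  rw [← exp_add]
  exact exp_le_exp.2 (by linarith)

/-- The factor `exp (2 * c)` is `exp c` lost in the numerator times `exp c` lost in the
normalising sum. -/
theorem exp_div_sum_exp_le_exp_two_mul_mul {ι : Type*} [Fintype ι] [Nonempty ι]
    (f g : ι → ℝ) {c : ℝ} (hfg : ∀ j, |f j - g j| ≤ c) (i : ι) :
    exp (f i) / ∑ j, exp (f j) ≤ exp (2 * c) * (exp (g i) / ∑ j, exp (g j)) := by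
  have hnum : exp (f i) ≤ exp c * exp (g i) :=
    exp_le_exp_mul_exp_of_sub_le (abs_le.1 (hfg i)).2
  have hden : ∑ j, exp (g j) ≤ exp c * ∑ j, exp (f j) := by
    rw [mul_sum]
    exact sum_le_sum fun j _ =>
      exp_le_exp_mul_exp_of_sub_le (abs_le.1 (abs_sub_comm (f j) (g j) ▸ hfg j)).2
  have hf_pos : 0 < ∑ j, exp (f j) := sum_pos (fun j _ => exp_pos _) univ_nonempty
  have hg_pos : 0 < ∑ j, exp (g j) := sum_pos (fun j _ => exp_pos _) univ_nonempty
  rw [mul_div_assoc', div_le_div_iff₀ hf_pos hg_pos]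
  calc exp (f i) * ∑ j, exp (g j) ≤ (exp c * exp (g i)) * (exp c * ∑ j, exp (f j)) := by
        gcongr
    _ = exp (2 * c) * exp (g i) * ∑ j, exp (f j) := by
        rw [two_mul, exp_add]
        ring

/-- The exponential mechanism with utility `u`, sensitivity
`Δu = max_{x, x' ∈ X, r ∈ R} |u(x,r) − u(x',r)| > 0` and budget `ε > 0`
satisfies `ε`-LDP. -/
theorem exponential_mechanism_ldp
    {X R : Type*} [Fintype X] [Fintype R] [Nonempty X] [Nonempty R]
    (u : X → R → ℝ) (ε : ℝ) (hε : 0 < ε) (Δu : ℝ)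
    (hΔdef : Δu = (Finset.univ (α := X × X × R)).sup'
      Finset.univ_nonempty (fun q => |u q.1 q.2.2 - u q.2.1 q.2.2|))
    (hΔpos : 0 < Δu) :
    ∀ (x x' : X) (r : R),
      Real.exp (ε * u x r / (2 * Δu)) /
          (∑ r' : R, Real.exp (ε * u x r' / (2 * Δu))) ≤
        Real.exp ε *
          (Real.exp (ε * u x' r / (2 * Δu)) /
            (∑ r' : R, Real.exp (ε * u x' r' / (2 * Δu)))) := by
  intro x x' r
  have hsens (s : R) : |u x s - u x' s| ≤ Δu :=
    hΔdef ▸ le_sup' (fun q : X × X × R => |u q.1 q.2.2 - u q.2.1 q.2.2|) (mem_univ (x, x', s))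
  have hscaled (s : R) : |ε * u x s / (2 * Δu) - ε * u x' s / (2 * Δu)| ≤ ε / 2 := by
    have h2Δ : 0 < 2 * Δu := by positivity
    rw [← sub_div, ← mul_sub, abs_div, abs_mul, abs_of_pos hε, abs_of_pos h2Δ, div_le_iff₀ h2Δ]
    nlinarith [hsens s]
  simpa only [mul_div_cancel₀ ε two_ne_zero] using
    exp_div_sum_exp_le_exp_two_mul_mul _ _ hscaled r
end

section
/- Let ε > 0 and b > 0, and define the square-wave density p(x, y) = e^ε/(2b·e^ε + 1) if |x − y| ≤ b and p(x, y) = 1/(2b·e^ε + 1) otherwise, for inputs x ∈ [0,1] and outputs y ∈ [−b, b+1]. Then for all x, x' ∈ [0,1] and all y ∈ [−b, b+1], p(x, y) ≤ e^ε · p(x', y); that is, the square-wave mechanism satisfies ε-local differential privacy. -/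
open Real

noncomputable def squareWaveDensity (ε b x y : ℝ) : ℝ :=
  if |x - y| ≤ b then exp ε / (2 * b * exp ε + 1) else 1 / (2 * b * exp ε + 1)

section SquareWave

variable {ε b : ℝ}

theorem squareWaveDensity_le (hε : 0 ≤ ε) (hb : 0 ≤ b) (x y : ℝ) :
    squareWaveDensity ε b x y ≤ exp ε * (1 / (2 * b * exp ε + 1)) := by
  have hD : 0 < 2 * b * exp ε + 1 := by positivity
  rw [mul_one_div, squareWaveDensity]
  split_ifs
  · exact le_rfl
  · exact div_le_div_of_nonneg_right (one_le_exp hε) hD.le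

theorem one_div_le_squareWaveDensity (hε : 0 ≤ ε) (hb : 0 ≤ b) (x y : ℝ) :
    1 / (2 * b * exp ε + 1) ≤ squareWaveDensity ε b x y := by
  have hD : 0 < 2 * b * exp ε + 1 := by positivity
  rw [squareWaveDensity]
  split_ifs
  · exact div_le_div_of_nonneg_right (one_le_exp hε) hD.le
  · exact le_rfl

end SquareWave

/-- The square-wave mechanism with budget `ε > 0` and half-width `b > 0`
satisfies `ε`-LDP: its output density at any `y ∈ [−b, b+1]` under input `x ∈ [0,1]`
is at most `e^ε` times its density under input `x' ∈ [0,1]`. -/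
theorem square_wave_ldp (ε b : ℝ) (hε : 0 < ε) (hb : 0 < b) :
    ∀ x x' y : ℝ, x ∈ Set.Icc (0 : ℝ) 1 → x' ∈ Set.Icc (0 : ℝ) 1 →
      y ∈ Set.Icc (-b) (b + 1) →
      (if |x - y| ≤ b then Real.exp ε / (2 * b * Real.exp ε + 1)
        else 1 / (2 * b * Real.exp ε + 1)) ≤
      Real.exp ε *
      (if |x' - y| ≤ b then Real.exp ε / (2 * b * Real.exp ε + 1)
        else 1 / (2 * b * Real.exp ε + 1)) := by
  intro x x' y _ _ _
  change squareWaveDensity ε b x y ≤ exp ε * squareWaveDensity ε b x' y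
  calc squareWaveDensity ε b x y ≤ exp ε * (1 / (2 * b * exp ε + 1)) :=
        squareWaveDensity_le hε.le hb.le x y
    _ ≤ exp ε * squareWaveDensity ε b x' y :=
        mul_le_mul_of_nonneg_left (one_div_le_squareWaveDensity hε.le hb.le x' y) (exp_pos ε).le
end

section
/- Let P be a finite nonempty set of points in a metric space with distance dist, p_α ∈ P, and let M be the exponential mechanism on P with utility u(p, r) = −dist(p, r), sensitivity Δu = max_{p, r, r' ∈ P} |u(p,r) − u(p,r')| > 0, and budget ε > 0. Let t > 0 and u_x ∈ ℝ, set R = 2tΔu/ε − u_x, assume R ≥ 0 and u_x ≤ u(p_α, p) for every p ∈ P with dist(p_α, p) ≤ R, and let C = {p ∈ P : dist(p_α, p) ≤ R}. Then, writing p̂_α = M(p_α), Pr[p_α ∉ C_τ(p̂_α, R)] = Pr[p̂_α ∉ C] ≤ (|P \ C| / |C|) · exp(−t); i.e., the probability that the true anchor point is not covered by the ball of radius R around the perturbed anchor decays exponentially in t. -/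
/-! Points of `C` carry exponential-mechanism weight at least `E = exp (ε u_x / (2Δu))`, because
their utility is at least `u_x`; points outside `C` are farther than `R = 2tΔu/ε − u_x`, so their
weight is at most `E · exp (−t)`. Comparing the mass outside `C` with the mass on `C` alone gives
the bound. -/

open Finset

theorem Finset.sum_sdiff_div_sum_le_card_div_card_mul {ι : Type*} [DecidableEq ι]
    {s t : Finset ι} (hts : t ⊆ s) (ht : t.Nonempty) {f : ι → ℝ} {a c : ℝ} (ha : 0 < a)
    (hf : ∀ i ∈ s \ t, 0 ≤ f i) (hlow : ∀ i ∈ t, a ≤ f i) (hup : ∀ i ∈ s \ t, f i ≤ a * c) :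
    (∑ i ∈ s \ t, f i) / ∑ i ∈ s, f i ≤ (#(s \ t) : ℝ) / #t * c := by
  have hmass : (#t : ℝ) * a ≤ ∑ i ∈ s, f i :=
    calc (#t : ℝ) * a = ∑ _i ∈ t, a := by rw [sum_const, nsmul_eq_mul]
      _ ≤ ∑ i ∈ t, f i := sum_le_sum hlow
      _ ≤ ∑ i ∈ s, f i := by
        rw [← sum_sdiff hts]
        exact le_add_of_nonneg_left (sum_nonneg hf)
  have htail : ∑ i ∈ s \ t, f i ≤ #(s \ t) * (a * c) := by
    simpa [sum_const, nsmul_eq_mul] using sum_le_sum hup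
  calc (∑ i ∈ s \ t, f i) / ∑ i ∈ s, f i
      ≤ #(s \ t) * (a * c) / (#t * a) :=
        div_le_div₀ ((sum_nonneg hf).trans htail) htail (by positivity) hmass
    _ = (#(s \ t) : ℝ) / #t * c := by field_simp

theorem exp_mechanism_anchor_coverage_general
    {α : Type*} [MetricSpace α] [DecidableEq α] (P : Finset α)
    (pα : α) (hpα : pα ∈ P) (ε : ℝ) (hε : 0 < ε) (Δu : ℝ)
    (hΔpos : 0 < Δu)
    (t : ℝ) (ux : ℝ)
    (R : ℝ) (hRdef : R = 2 * t * Δu / ε - ux) (hR : 0 ≤ R)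
    (hux : ∀ p ∈ P, dist pα p ≤ R → ux ≤ -(dist pα p))
    (C : Finset α) (hC : C = P.filter (fun p => dist pα p ≤ R)) :
    -- `Pr[p_α ∉ C_τ(p̂_α, R)] = Pr[p̂_α ∉ C]`
    (∑ r ∈ P.filter (fun r => ¬ dist r pα ≤ R),
        Real.exp (ε * (-(dist pα r)) / (2 * Δu))) /
        (∑ r' ∈ P, Real.exp (ε * (-(dist pα r')) / (2 * Δu))) =
      (∑ r ∈ P \ C, Real.exp (ε * (-(dist pα r)) / (2 * Δu))) /
        (∑ r' ∈ P, Real.exp (ε * (-(dist pα r')) / (2 * Δu))) ∧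
    -- `Pr[p̂_α ∉ C] ≤ (|P \ C| / |C|) · exp(−t)`
    (∑ r ∈ P \ C, Real.exp (ε * (-(dist pα r)) / (2 * Δu))) /
        (∑ r' ∈ P, Real.exp (ε * (-(dist pα r')) / (2 * Δu))) ≤
      ((P \ C).card : ℝ) / (C.card : ℝ) * Real.exp (-t) := by
  have hnotC : P.filter (fun r => ¬ dist r pα ≤ R) = P \ C := by
    simp_rw [hC, ← filter_not, dist_comm]
  refine ⟨by rw [hnotC], ?_⟩
  have hpαC : pα ∈ C := by simp [hC, hpα, hR]
  refine sum_sdiff_div_sum_le_card_div_card_mul (hC ▸ filter_subset _ _) ⟨pα, hpαC⟩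
    (Real.exp_pos (ε * ux / (2 * Δu))) (fun _ _ => (Real.exp_pos _).le) ?_ ?_
  · intro p hp
    rw [hC, mem_filter] at hp
    gcongr
    exact hux p hp.1 hp.2
  · intro p hp
    have hfar : R < dist pα p := by
      rw [← hnotC, mem_filter, dist_comm] at hp
      exact not_le.1 hp.2
    calc Real.exp (ε * (-(dist pα p)) / (2 * Δu)) ≤ Real.exp (ε * (-R) / (2 * Δu)) := by
          gcongr
      _ = Real.exp (ε * ux / (2 * Δu)) * Real.exp (-t) := by
          rw [← Real.exp_add, hRdef]
          congr 1
          field_simp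
          ring

/-- With `R = 2tΔu/ε − u_x`, the probability that the true anchor point
`p_α` is not covered by the ball of radius `R` around the perturbed anchor
`p̂_α = M(p_α)` equals the probability that `p̂_α ∉ C` and is at most
`(|P \ C| / |C|) · exp(−t)`. -/
theorem exp_mechanism_anchor_coverage
    {α : Type*} [MetricSpace α] [DecidableEq α] (P : Finset α) (hP : P.Nonempty)
    (pα : α) (hpα : pα ∈ P) (ε : ℝ) (hε : 0 < ε) (Δu : ℝ)
    (hΔdef : Δu = (P ×ˢ P ×ˢ P).sup' (hP.product (hP.product hP))
      (fun q => |(-(dist q.1 q.2.1)) - (-(dist q.1 q.2.2))|))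
    (hΔpos : 0 < Δu)
    (t : ℝ) (ht : 0 < t) (ux : ℝ)
    (R : ℝ) (hRdef : R = 2 * t * Δu / ε - ux) (hR : 0 ≤ R)
    (hux : ∀ p ∈ P, dist pα p ≤ R → ux ≤ -(dist pα p))
    (C : Finset α) (hC : C = P.filter (fun p => dist pα p ≤ R)) :
    -- `Pr[p_α ∉ C_τ(p̂_α, R)] = Pr[p̂_α ∉ C]`
    (∑ r ∈ P.filter (fun r => ¬ dist r pα ≤ R),
        Real.exp (ε * (-(dist pα r)) / (2 * Δu))) /
        (∑ r' ∈ P, Real.exp (ε * (-(dist pα r')) / (2 * Δu))) =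
      (∑ r ∈ P \ C, Real.exp (ε * (-(dist pα r)) / (2 * Δu))) /
        (∑ r' ∈ P, Real.exp (ε * (-(dist pα r')) / (2 * Δu))) ∧
    -- `Pr[p̂_α ∉ C] ≤ (|P \ C| / |C|) · exp(−t)`
    (∑ r ∈ P \ C, Real.exp (ε * (-(dist pα r)) / (2 * Δu))) /
        (∑ r' ∈ P, Real.exp (ε * (-(dist pα r')) / (2 * Δu))) ≤
      ((P \ C).card : ℝ) / (C.card : ℝ) * Real.exp (-t) :=
  exp_mechanism_anchor_coverage_general P pα hpα ε hε Δu hΔpos t ux R hRdef hR hux C hC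
end
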